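/- For every natural number n and all x, y ∈ ℂ, the function u ↦ (1 + conj(x)·u)^n · (1 + conj(u)·y)^n · (1 + |u|²)^{−(n+2)} is integrable on ℂ with respect to Lebesgue measure dA, and ((n+1)/π) ∫_ℂ (1 + conj(x)·u)^n (1 + conj(u)·y)^n (1 + |u|²)^{−(n+2)} dA(u) = (1 + conj(x)·y)^n. (This is the reproducing/overcompleteness identity for the Bergman kernel B_n(x,y) = ((n+1)/(2πn))·(1 + conj(x)·y)^n/(1+|x|²)^n of the n-th power of the prequantum line bundle on the 2-sphere, written in the standard affine chart.) -/

import Mathlib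

/-!
Expand both binomials. The weight `(1 + |u|²)^{-(n+2)}` is rotation invariant, so integrating in
polar coordinates kills every monomial `u^j conj(u)^k` with `j ≠ k`, while the substitutions
`t = r²` and `s = t / (1 + t)` turn the diagonal ones into Beta integrals:
`∫ |u|^{2j} (1 + |u|²)^{-(n+2)} dA = π j! (n-j)! / (n+1)! = π / ((n+1) C(n,j))`.
The surviving diagonal terms `C(n,j)² (conj x · y)^j` then reassemble `(1 + conj x · y)ⁿ`.
Integrability comes from `|u|^{j+k} ≤ (1 + |u|²)ⁿ` for `j + k ≤ 2n` and the integrability of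
`(1 + |u|²)^{-2}` on the plane.
-/

open MeasureTheory Set Complex Nat ComplexConjugate
open scoped Real

theorem integral_ofReal_pow_mul_one_sub_pow (j m : ℕ) :
    ∫ x in (0 : ℝ)..1, (x : ℂ) ^ j * (1 - (x : ℂ)) ^ m = j ! * m ! / (j + m + 1)! := by
  have h := betaIntegral_eq_Gamma_mul_div (j + 1) (m + 1) (by simp; positivity)
    (by simp; positivity)
  rw [betaIntegral, show (j : ℂ) + 1 + (m + 1) = ((j + m + 1 : ℕ) : ℂ) + 1 by push_cast; ring,
    Gamma_nat_eq_factorial, Gamma_nat_eq_factorial, Gamma_nat_eq_factorial] at h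
  simpa [← cpow_natCast] using h

theorem image_div_one_sub_Ioo : (fun s : ℝ => s / (1 - s)) '' Ioo 0 1 = Ioi 0 := by
  ext t
  constructor
  · rintro ⟨s, ⟨hs₀, hs₁⟩, rfl⟩
    exact div_pos hs₀ (sub_pos.2 hs₁)
  · intro (ht : 0 < t)
    refine ⟨t / (1 + t), ⟨by positivity, (div_lt_one (by positivity)).2 (by linarith)⟩, ?_⟩
    field_simp
    ring

theorem integral_Ioi_eq_integral_Ioo_div_one_sub {E : Type*} [NormedAddCommGroup E]
    [NormedSpace ℝ E] (g : ℝ → E) :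
    ∫ t in Ioi 0, g t = ∫ s in Ioo 0 1, ((1 - s) ^ 2)⁻¹ • g (s / (1 - s)) := by
  have hderiv : ∀ s ∈ Ioo (0 : ℝ) 1,
      HasDerivWithinAt (fun s : ℝ => s / (1 - s)) ((1 - s) ^ 2)⁻¹ (Ioo 0 1) s := by
    intro s ⟨_, hs₁⟩
    have hne : 1 - s ≠ 0 := (sub_pos.2 hs₁).ne'
    refine (((hasDerivAt_id s).div ((hasDerivAt_id s).const_sub 1) hne).congr_deriv ?_
      ).hasDerivWithinAt
    simp only [id]
    field_simp
    ring
  have hinj : InjOn (fun s : ℝ => s / (1 - s)) (Ioo 0 1) := by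
    intro a ⟨_, ha⟩ b ⟨_, hb⟩ hab
    have := (sub_pos.2 ha).ne'
    have := (sub_pos.2 hb).ne'
    field_simp at hab
    linarith
  rw [← image_div_one_sub_Ioo,
    integral_image_eq_integral_abs_deriv_smul measurableSet_Ioo hderiv hinj]
  refine setIntegral_congr_fun measurableSet_Ioo fun s _ => ?_
  rw [abs_of_nonneg (by positivity)]

theorem integral_Ioi_ofReal_pow_mul_inv_one_add_pow (j m : ℕ) :
    ∫ t in Ioi (0 : ℝ), (t : ℂ) ^ j * ((1 + (t : ℂ)) ^ (j + m + 2))⁻¹ =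
      j ! * m ! / (j + m + 1)! := by
  have hsubst : ∀ s ∈ Ioo (0 : ℝ) 1,
      ((1 - s) ^ 2)⁻¹ •
          (((s / (1 - s) : ℝ) : ℂ) ^ j * ((1 + ((s / (1 - s) : ℝ) : ℂ)) ^ (j + m + 2))⁻¹)
        = (s : ℂ) ^ j * (1 - (s : ℂ)) ^ m := by
    intro s ⟨_, hs₁⟩
    have : (1 : ℂ) - s ≠ 0 := by exact_mod_cast (sub_pos.2 hs₁).ne'
    have hinv : (1 : ℂ) + s / (1 - s) = (1 - (s : ℂ))⁻¹ := by field_simp; ring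
    rw [Complex.real_smul]
    push_cast
    rw [hinv, inv_pow, inv_inv, div_pow, pow_add, pow_add]
    field_simp
  rw [integral_Ioi_eq_integral_Ioo_div_one_sub, setIntegral_congr_fun measurableSet_Ioo hsubst,
    ← integral_Ioc_eq_integral_Ioo, ← intervalIntegral.integral_of_le zero_le_one,
    integral_ofReal_pow_mul_one_sub_pow]

theorem integral_Ioi_smul_comp_sq {E : Type*} [NormedAddCommGroup E] [NormedSpace ℝ E]
    (g : ℝ → E) : ∫ r in Ioi 0, r • g (r ^ 2) = (2 : ℝ)⁻¹ • ∫ t in Ioi 0, g t := by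
  rw [← integral_comp_rpow_Ioi_of_pos (g := g) zero_lt_two, ← integral_smul]
  refine setIntegral_congr_fun measurableSet_Ioi fun r _ => ?_
  norm_num [smul_smul]
  ring_nf

theorem integral_Ioi_ofReal_pow_mul_inv_one_add_sq_pow (j m : ℕ) :
    ∫ r in Ioi (0 : ℝ), (r : ℂ) ^ (2 * j + 1) * ((1 + (r : ℂ) ^ 2) ^ (j + m + 2))⁻¹ =
      j ! * m ! / (j + m + 1)! / 2 := by
  have h := integral_Ioi_smul_comp_sq fun t : ℝ =>
    (t : ℂ) ^ j * ((1 + (t : ℂ)) ^ (j + m + 2))⁻¹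
  rw [integral_Ioi_ofReal_pow_mul_inv_one_add_pow] at h
  convert h using 1
  · refine integral_congr_ae (.of_forall fun r => ?_)
    simp only [Complex.real_smul]
    push_cast
    ring
  · rw [Complex.real_smul]
    push_cast
    ring

theorem integral_Ioo_exp_int_mul_mul_I (m : ℤ) :
    ∫ θ in Ioo (-π) π, exp (m * θ * I) = if m = 0 then (2 * π : ℂ) else 0 := by
  rw [← integral_Ioc_eq_integral_Ioo,
    ← intervalIntegral.integral_of_le (by linarith [Real.pi_pos])]
  split_ifs with hm
  · simp [hm]
    ring
  · have hmI : (m : ℂ) * I ≠ 0 := by simp [hm]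
    simp_rw [mul_right_comm _ _ I]
    have hperiodic : exp (m * I * π) = exp (m * I * (-π : ℝ)) :=
      exp_eq_exp_iff_exists_int.2 ⟨m, by push_cast; ring⟩
    rw [integral_exp_mul_complex hmI, hperiodic, sub_self, zero_div]

theorem integral_pow_mul_conj_pow_mul_comp_norm (g : ℝ → ℂ) (j k : ℕ) :
    ∫ u : ℂ, u ^ j * conj u ^ k * g ‖u‖ =
      if j = k then 2 * π * ∫ r in Ioi (0 : ℝ), (r : ℂ) ^ (2 * j + 1) * g r else 0 := by
  have hpolar : ∀ p ∈ polarCoord.target,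
      p.1 • ((Complex.polarCoord.symm p) ^ j * conj (Complex.polarCoord.symm p) ^ k *
        g ‖Complex.polarCoord.symm p‖) =
      (p.1 : ℂ) ^ (j + k + 1) * g p.1 * exp (((j - k : ℤ) : ℂ) * p.2 * I) := by
    rintro ⟨r, θ⟩ ⟨hr, -⟩
    have hsymm : Complex.polarCoord.symm (r, θ) = r * exp (θ * I) := by
      simp [exp_mul_I]
    have hexp :
        exp (θ * I) ^ j * conj (exp (θ * I)) ^ k = exp (((j - k : ℤ) : ℂ) * θ * I) := by
      rw [← exp_conj, ← exp_nat_mul, ← exp_nat_mul, ← exp_add, map_mul, conj_ofReal, conj_I]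
      push_cast
      ring_nf
    dsimp only
    rw [hsymm, norm_mul, norm_exp_ofReal_mul_I, Complex.norm_real, Real.norm_of_nonneg hr.le,
      mul_one, map_mul, conj_ofReal, mul_pow, mul_pow, real_smul, ← hexp]
    ring
  rw [← Complex.integral_comp_polarCoord_symm, setIntegral_congr_fun
    polarCoord.open_target.measurableSet hpolar, polarCoord_target,
    Measure.volume_eq_prod, setIntegral_prod_mul (fun r : ℝ => (r : ℂ) ^ (j + k + 1) * g r)
      (fun θ : ℝ => exp (((j - k : ℤ) : ℂ) * θ * I)), integral_Ioo_exp_int_mul_mul_I]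
  rcases eq_or_ne j k with rfl | hjk
  · simp only [sub_self, if_true]
    rw [two_mul j]
    ring
  · rw [if_neg (sub_ne_zero.2 (by exact_mod_cast hjk)), if_neg hjk, mul_zero]

theorem pow_le_one_add_sq_pow {r : ℝ} (hr : 0 ≤ r) {m n : ℕ} (hmn : m ≤ 2 * n) :
    r ^ m ≤ (1 + r ^ 2) ^ n := by
  rcases le_total r 1 with hr₁ | hr₁
  · calc r ^ m ≤ 1 := pow_le_one₀ hr hr₁
      _ ≤ (1 + r ^ 2) ^ n := one_le_pow₀ (by nlinarith)
  · calc r ^ m ≤ r ^ (2 * n) := pow_le_pow_right₀ hr₁ hmn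
      _ = (r ^ 2) ^ n := pow_mul r 2 n
      _ ≤ (1 + r ^ 2) ^ n := pow_le_pow_left₀ (by positivity) (by linarith) n

theorem norm_inv_one_add_norm_sq_pow (u : ℂ) (n : ℕ) :
    ‖((1 + (‖u‖ : ℂ) ^ 2) ^ n)⁻¹‖ = ((1 + ‖u‖ ^ 2) ^ n)⁻¹ := by
  rw [norm_inv, norm_pow, ← ofReal_pow, ← ofReal_one, ← ofReal_add, norm_real,
    Real.norm_of_nonneg (by positivity)]

theorem integrable_pow_mul_conj_pow_mul_inv_one_add_norm_sq_pow {j k n : ℕ}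
    (hjk : j + k ≤ 2 * n) :
    Integrable fun u : ℂ => u ^ j * conj u ^ k * ((1 + (‖u‖ : ℂ) ^ 2) ^ (n + 2))⁻¹ := by
  have hdom : Integrable fun u : ℂ => (1 + ‖u‖ ^ 2) ^ (-(4 : ℝ) / 2) :=
    integrable_rpow_neg_one_add_norm_sq (by norm_num [finrank_real_complex])
  refine hdom.mono' (by fun_prop : Measurable _).aestronglyMeasurable (.of_forall fun u => ?_)
  have hpos : 0 < 1 + ‖u‖ ^ 2 := by positivity
  rw [norm_mul, norm_mul, norm_pow, norm_pow, RCLike.norm_conj, ← pow_add,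
    norm_inv_one_add_norm_sq_pow, show -(4 : ℝ) / 2 = -(2 : ℕ) by norm_num,
    Real.rpow_neg hpos.le, Real.rpow_natCast]
  calc ‖u‖ ^ (j + k) * ((1 + ‖u‖ ^ 2) ^ (n + 2))⁻¹
      ≤ (1 + ‖u‖ ^ 2) ^ n * ((1 + ‖u‖ ^ 2) ^ (n + 2))⁻¹ := by
        gcongr
        exact pow_le_one_add_sq_pow (norm_nonneg u) hjk
    _ = ((1 + ‖u‖ ^ 2) ^ 2)⁻¹ := by
        rw [pow_add, mul_inv, ← mul_assoc, mul_inv_cancel₀ (by positivity), one_mul]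

theorem integral_pow_mul_conj_pow_mul_inv_one_add_norm_sq_pow {j n : ℕ} (hj : j ≤ n) (k : ℕ) :
    ∫ u : ℂ, u ^ j * conj u ^ k * ((1 + (‖u‖ : ℂ) ^ 2) ^ (n + 2))⁻¹ =
      if j = k then (π : ℂ) / ((n + 1) * n.choose j) else 0 := by
  obtain ⟨m, rfl⟩ := Nat.exists_eq_add_of_le hj
  refine (integral_pow_mul_conj_pow_mul_comp_norm
    (fun r => ((1 + (r : ℂ) ^ 2) ^ (j + m + 2))⁻¹) j k).trans ?_
  split_ifs
  · have hfact : ((j + m).choose j * m ! * j ! : ℂ) = (j + m)! := by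
      rw [add_comm j m]
      exact_mod_cast Nat.add_choose_mul_factorial_mul_factorial m j
    rw [integral_Ioi_ofReal_pow_mul_inv_one_add_sq_pow, Nat.factorial_succ, Nat.cast_mul, ← hfact]
    have : ((j + m).choose j : ℂ) ≠ 0 := by exact_mod_cast (Nat.choose_pos (by omega)).ne'
    have : (j ! : ℂ) ≠ 0 := Nat.cast_ne_zero.2 j.factorial_ne_zero
    have : (m ! : ℂ) ≠ 0 := Nat.cast_ne_zero.2 m.factorial_ne_zero
    push_cast
    field_simp
  · rfl

section WeightedPolynomial

variable (n : ℕ) (a : ℕ → ℕ → ℂ)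

theorem integrable_const_mul_pow_mul_conj_pow_mul_inv_one_add_norm_sq_pow {j k : ℕ}
    (hj : j ∈ Finset.range (n + 1)) (hk : k ∈ Finset.range (n + 1)) :
    Integrable fun u : ℂ =>
      a j k * (u ^ j * conj u ^ k * ((1 + (‖u‖ : ℂ) ^ 2) ^ (n + 2))⁻¹) :=
  (integrable_pow_mul_conj_pow_mul_inv_one_add_norm_sq_pow
    (by simp only [Finset.mem_range] at hj hk; omega)).const_mul _

theorem integrable_sum_pow_mul_conj_pow_mul_inv_one_add_norm_sq_pow :
    Integrable fun u : ℂ => ∑ j ∈ Finset.range (n + 1), ∑ k ∈ Finset.range (n + 1),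
      a j k * (u ^ j * conj u ^ k * ((1 + (‖u‖ : ℂ) ^ 2) ^ (n + 2))⁻¹) :=
  integrable_finsetSum _ fun _ hj => integrable_finsetSum _ fun _ hk =>
    integrable_const_mul_pow_mul_conj_pow_mul_inv_one_add_norm_sq_pow n a hj hk

theorem integral_sum_pow_mul_conj_pow_mul_inv_one_add_norm_sq_pow :
    ∫ u : ℂ, ∑ j ∈ Finset.range (n + 1), ∑ k ∈ Finset.range (n + 1),
      a j k * (u ^ j * conj u ^ k * ((1 + (‖u‖ : ℂ) ^ 2) ^ (n + 2))⁻¹) =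
      ∑ j ∈ Finset.range (n + 1), a j j * ((π : ℂ) / ((n + 1) * n.choose j)) := by
  have hint := @integrable_const_mul_pow_mul_conj_pow_mul_inv_one_add_norm_sq_pow n a
  rw [integral_finsetSum _ fun _ hj => integrable_finsetSum _ fun _ hk => hint hj hk]
  refine Finset.sum_congr rfl fun j hj => ?_
  rw [integral_finsetSum _ fun _ hk => hint hj hk]
  simp_rw [integral_const_mul, integral_pow_mul_conj_pow_mul_inv_one_add_norm_sq_pow
    (Nat.lt_succ_iff.1 (Finset.mem_range.1 hj)), mul_ite, mul_zero]
  rw [Finset.sum_ite_eq, if_pos hj]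

end WeightedPolynomial

theorem one_add_mul_pow_mul_one_add_mul_pow {R : Type*} [CommSemiring R] (a b u v : R) (n : ℕ) :
    (1 + a * u) ^ n * (1 + v * b) ^ n =
      ∑ j ∈ Finset.range (n + 1), ∑ k ∈ Finset.range (n + 1),
        n.choose j * n.choose k * a ^ j * b ^ k * (u ^ j * v ^ k) := by
  rw [add_comm 1, add_comm 1, add_pow, add_pow, Finset.sum_mul_sum]
  refine Finset.sum_congr rfl fun j _ => Finset.sum_congr rfl fun k _ => ?_
  simp only [one_pow, mul_one, mul_pow]
  ring

theorem sphere_bergman_reproducing (n : ℕ) (x y : ℂ) :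
    Integrable (fun u : ℂ =>
      (1 + (starRingEnd ℂ) x * u) ^ n * (1 + (starRingEnd ℂ) u * y) ^ n *
        ((1 + (‖u‖ : ℂ) ^ 2) ^ (n + 2))⁻¹) (volume : Measure ℂ) ∧
    ((n : ℂ) + 1) / (Real.pi : ℂ) *
      ∫ u : ℂ, (1 + (starRingEnd ℂ) x * u) ^ n * (1 + (starRingEnd ℂ) u * y) ^ n *
        ((1 + (‖u‖ : ℂ) ^ 2) ^ (n + 2))⁻¹ ∂(volume : Measure ℂ) =
      (1 + (starRingEnd ℂ) x * y) ^ n := by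
  have hexpand : (fun u : ℂ => (1 + conj x * u) ^ n * (1 + conj u * y) ^ n *
      ((1 + (‖u‖ : ℂ) ^ 2) ^ (n + 2))⁻¹) = fun u => ∑ j ∈ Finset.range (n + 1),
        ∑ k ∈ Finset.range (n + 1), n.choose j * n.choose k * conj x ^ j * y ^ k *
          (u ^ j * conj u ^ k * ((1 + (‖u‖ : ℂ) ^ 2) ^ (n + 2))⁻¹) := by
    funext u
    simp_rw [one_add_mul_pow_mul_one_add_mul_pow, Finset.sum_mul, mul_assoc]
  refine ⟨hexpand ▸ integrable_sum_pow_mul_conj_pow_mul_inv_one_add_norm_sq_pow n _, ?_⟩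
  rw [hexpand, integral_sum_pow_mul_conj_pow_mul_inv_one_add_norm_sq_pow, Finset.mul_sum,
    add_comm 1, add_pow]
  refine Finset.sum_congr rfl fun j hj => ?_
  have : (n.choose j : ℂ) ≠ 0 := by
    exact_mod_cast (Nat.choose_pos (Nat.lt_succ_iff.1 (Finset.mem_range.1 hj))).ne'
  have : (π : ℂ) ≠ 0 := ofReal_ne_zero.2 Real.pi_ne_zero
  field_simp
  ring
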